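/- arXiv:2306.10615 — 2 statements merged into one kernel-verified Lean document; each statement's English description precedes it below -/
import Mathlib

section
/- For all y, p ∈ (0,1), the binary KL divergence satisfies KL(y‖p) ≤ (2 / min{p, 1−p}) · (y−p)². -/
/-- `KL(y‖p) ≤ (2 / min{p, 1−p}) · (y−p)²` for `y, p ∈ (0,1)`. -/
theorem binary_kl_upper (y p : ℝ) (hy : y ∈ Set.Ioo (0:ℝ) 1) (hp : p ∈ Set.Ioo (0:ℝ) 1) :
    y * Real.log (y / p) + (1 - y) * Real.log ((1 - y) / (1 - p))
      ≤ (2 / min p (1 - p)) * (y - p) ^ 2 := by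
  obtain ⟨hy0, hy1⟩ := hy
  obtain ⟨hp0, hp1⟩ := hp
  have hy1' : (0:ℝ) < 1 - y := by linarith
  have hp1' : (0:ℝ) < 1 - p := by linarith
  have h1 : Real.log (y / p) ≤ y / p - 1 :=
    Real.log_le_sub_one_of_pos (by positivity)
  have h2 : Real.log ((1 - y) / (1 - p)) ≤ (1 - y) / (1 - p) - 1 :=
    Real.log_le_sub_one_of_pos (by positivity)
  have hstep : y * Real.log (y / p) + (1 - y) * Real.log ((1 - y) / (1 - p))
      ≤ (y - p) ^ 2 / (p * (1 - p)) := by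
    have := mul_le_mul_of_nonneg_left h1 hy0.le
    have := mul_le_mul_of_nonneg_left h2 hy1'.le
    have heq : y * (y / p - 1) + (1 - y) * ((1 - y) / (1 - p) - 1)
        = (y - p) ^ 2 / (p * (1 - p)) := by
      field_simp
      ring
    nlinarith
  refine hstep.trans ?_
  have hsq : (0:ℝ) ≤ (y - p) ^ 2 := sq_nonneg _
  rcases le_total p (1 - p) with h | h
  · rw [min_eq_left h, div_le_iff₀ (by positivity)]
    have he : 2 / p * (y - p) ^ 2 * (p * (1 - p)) = 2 * (1 - p) * (y - p) ^ 2 := by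
      field_simp
    rw [he]; nlinarith
  · rw [min_eq_right h, div_le_iff₀ (by positivity)]
    have he : 2 / (1 - p) * (y - p) ^ 2 * (p * (1 - p)) = 2 * p * (y - p) ^ 2 := by
      field_simp
    rw [he]; nlinarith
end

section
/- Let D be a probability distribution over X × [0,1] with measurable X, let 0 < α ≤ β, let (f,g) be a Fenchel–Legendre pair with f' being [1/β, 1/α] bi-Lipschitz on the range of g'. Let H be a set of measurable functions X → ran(g'). If a predictor p : X → ran(g') satisfies E[ℓ_g(y, f'(p(x)))] ≤ inf_{h∈H} E[ℓ_g(y, f'(h(x)))] + ε, then E[(y − p(x))²] ≤ (β/α)·inf_{h∈H} E[(y − h(x))²] + 2βε. -/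
open MeasureTheory


section PW
variable {al be : ℝ} {g' f' : ℝ → ℝ}

lemma mem_range_between (hcont : Continuous g') {a b r : ℝ}
    (ha : a ∈ Set.range g') (hb : b ∈ Set.range g')
    (h1 : a ≤ r) (h2 : r ≤ b) : r ∈ Set.range g' := by
  obtain ⟨x, hx⟩ := ha; obtain ⟨y, hy⟩ := hb
  exact intermediate_value_univ x y hcont (by rw [hx, hy]; exact ⟨h1, h2⟩)

variable (hα : 0 < al) (hαβ : al ≤ be)
  (hinv : ∀ r ∈ Set.range g', g' (f' r) = r)
  (hbi : ∀ r₁ ∈ Set.range g', ∀ r₂ ∈ Set.range g', r₁ < r₂ →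
      (1 / be) * (r₂ - r₁) ≤ f' r₂ - f' r₁ ∧ f' r₂ - f' r₁ ≤ (1 / al) * (r₂ - r₁))

include hα hαβ hbi

lemma biLe {a b : ℝ} (ha : a ∈ Set.range g') (hb : b ∈ Set.range g') (hab : a ≤ b) :
    (b - a) / be ≤ f' b - f' a ∧ f' b - f' a ≤ (b - a) / al := by
  have hbe : 0 < be := lt_of_lt_of_le hα hαβ
  rcases eq_or_lt_of_le hab with rfl | h
  · constructor <;> simp
  · obtain ⟨h1, h2⟩ := hbi a ha b hb h
    rw [one_div, inv_mul_le_iff₀ hbe] at h1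
    rw [one_div, le_inv_mul_iff₀ hα] at h2
    constructor
    · rw [div_le_iff₀ hbe]; linarith
    · rw [le_div_iff₀ hα]; linarith
end PW

section PW2
variable {al be : ℝ} {g' f' : ℝ → ℝ}
variable (hα : 0 < al) (hαβ : al ≤ be)
  (hcont : Continuous g') (hmono : Monotone g')
  (hinv : ∀ r ∈ Set.range g', g' (f' r) = r)
  (hbi : ∀ r₁ ∈ Set.range g', ∀ r₂ ∈ Set.range g', r₁ < r₂ →
      (1 / be) * (r₂ - r₁) ≤ f' r₂ - f' r₁ ∧ f' r₂ - f' r₁ ≤ (1 / al) * (r₂ - r₁))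

include hα hαβ hcont hmono hinv hbi

/-- (iii) : `g' τ ≥ b - β (f' b - τ)` for `τ ≤ f' b`. -/
lemma pt_iii {b τ : ℝ} (hb : b ∈ Set.range g') (hτ2 : τ ≤ f' b) :
    b - be * (f' b - τ) ≤ g' τ := by
  have hbe : 0 < be := lt_of_lt_of_le hα hαβ
  set s := g' τ with hs
  have hsb : s ≤ b := by rw [← hinv b hb]; exact hmono hτ2
  rcases eq_or_lt_of_le hsb with heq | hlt
  · nlinarith
  · by_contra hc
    push_neg at hc
    set u := b - be * (f' b - τ) with hu
    have hsu : s < u := hc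
    have hub : u ≤ b := by nlinarith
    set r := (s + u) / 2 with hr
    have hsr : s < r := by simp [hr]; linarith
    have hru : r < u := by simp [hr]; linarith
    have hrb : r < b := lt_of_lt_of_le hru hub
    have hrR : r ∈ Set.range g' :=
      mem_range_between hcont ⟨τ, rfl⟩ hb hsr.le hrb.le
    have hfr : τ < f' r := by
      by_contra hfr
      push_neg at hfr
      have : r ≤ s := by rw [← hinv r hrR, hs]; exact hmono hfr
      linarith
    have hbl := (biLe hα hαβ hbi hrR hb hrb.le).1
    have : f' b - τ < (b - r) / be := by
      rw [lt_div_iff₀ hbe]; nlinarith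
    linarith

/-- (iv) : `g' τ ≤ b - α (f' b - τ)` for `f' a ≤ τ ≤ f' b`, `a ≤ b` in range. -/
lemma pt_iv {a b τ : ℝ} (ha : a ∈ Set.range g') (hb : b ∈ Set.range g')
    (hab : a ≤ b) (hτ1 : f' a ≤ τ) (hτ2 : τ ≤ f' b) :
    g' τ ≤ b - al * (f' b - τ) := by
  set s := g' τ with hs
  have hsa : a ≤ s := by rw [← hinv a ha]; exact hmono hτ1
  have hT : f' b - f' a ≤ (b - a) / al := (biLe hα hαβ hbi ha hb hab).2
  rcases eq_or_lt_of_le hsa with heq | hlt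
  · rw [← heq]
    have h1 : f' b - τ ≤ (b - a) / al := by linarith
    rw [le_div_iff₀ hα] at h1
    nlinarith
  · by_contra hc
    push_neg at hc
    set u := b - al * (f' b - τ) with hu
    have hus : u < s := hc
    have hua : a ≤ u := by
      have : f' b - τ ≤ (b - a) / al := by linarith
      rw [le_div_iff₀ hα] at this; nlinarith
    set r := (u + s) / 2 with hr
    have hur : u < r := by simp [hr]; linarith
    have hrs : r < s := by simp [hr]; linarith
    have har : a < r := lt_of_le_of_lt hua hur
    have hsb : s ≤ b := by rw [← hinv b hb]; exact hmono hτ2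
    have hrR : r ∈ Set.range g' :=
      mem_range_between hcont ha ⟨τ, rfl⟩ har.le hrs.le
    have hfr : f' r < τ := by
      by_contra hfr
      push_neg at hfr
      have : s ≤ r := by rw [← hinv r hrR, hs]; exact hmono hfr
      linarith
    have hbl := (biLe hα hαβ hbi hrR hb (lt_of_lt_of_le hrs hsb).le).2
    have h1 : f' b - τ < (b - r) / al := by linarith
    have h2 : (b - r) / al < f' b - τ := by
      rw [div_lt_iff₀ hα]; nlinarith
    linarith

/-- (v) : `g' τ ≤ a + β (τ - f' a)` for `τ ≥ f' a`. -/
lemma pt_v {a τ : ℝ} (ha : a ∈ Set.range g') (hτ1 : f' a ≤ τ) :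
    g' τ ≤ a + be * (τ - f' a) := by
  have hbe : 0 < be := lt_of_lt_of_le hα hαβ
  set s := g' τ with hs
  have hsa : a ≤ s := by rw [← hinv a ha]; exact hmono hτ1
  rcases eq_or_lt_of_le hsa with heq | hlt
  · nlinarith
  · by_contra hc
    push_neg at hc
    set u := a + be * (τ - f' a) with hu
    have hus : u < s := hc
    have hua : a ≤ u := by nlinarith
    set r := (u + s) / 2 with hr
    have hur : u < r := by simp [hr]; linarith
    have hrs : r < s := by simp [hr]; linarith
    have hrR : r ∈ Set.range g' :=
      mem_range_between hcont ha ⟨τ, rfl⟩ (le_trans hua hur.le) hrs.le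
    have hfr : f' r < τ := by
      by_contra hfr
      push_neg at hfr
      have : s ≤ r := by rw [← hinv r hrR, hs]; exact hmono hfr
      linarith
    have hbl := (biLe hα hαβ hbi ha hrR (le_trans hua hur.le)).1
    have h1 : (r - a) / be < τ - f' a := by linarith
    have h2 : τ - f' a < (r - a) / be := by
      rw [lt_div_iff₀ hbe]; nlinarith
    linarith

/-- (vi) : `g' τ ≥ a + α (τ - f' a)` for `f' a ≤ τ ≤ f' b`, `a ≤ b` in range. -/
lemma pt_vi {a b τ : ℝ} (ha : a ∈ Set.range g') (hb : b ∈ Set.range g')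
    (hab : a ≤ b) (hτ1 : f' a ≤ τ) (hτ2 : τ ≤ f' b) :
    a + al * (τ - f' a) ≤ g' τ := by
  set s := g' τ with hs
  have hsa : a ≤ s := by rw [← hinv a ha]; exact hmono hτ1
  have hsb : s ≤ b := by rw [← hinv b hb]; exact hmono hτ2
  have hT : f' b - f' a ≤ (b - a) / al := (biLe hα hαβ hbi ha hb hab).2
  rcases eq_or_lt_of_le hsb with heq | hlt
  · have h1 : τ - f' a ≤ (b - a) / al := by linarith
    rw [le_div_iff₀ hα] at h1
    nlinarith
  · by_contra hc
    push_neg at hc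
    set u := a + al * (τ - f' a) with hu
    have hsu : s < u := hc
    have hub : u ≤ b := by
      have h1 : τ - f' a ≤ (b - a) / al := by linarith
      rw [le_div_iff₀ hα] at h1
      nlinarith
    set r := (s + u) / 2 with hr
    have hsr : s < r := by simp [hr]; linarith
    have hru : r < u := by simp [hr]; linarith
    have hrR : r ∈ Set.range g' :=
      mem_range_between hcont ⟨τ, rfl⟩ hb hsr.le (le_trans hru.le hub)
    have hfr : τ < f' r := by
      by_contra hfr
      push_neg at hfr
      have : r ≤ s := by rw [← hinv r hrR, hs]; exact hmono hfr
      linarith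
    have hbl := (biLe hα hαβ hbi ha hrR (le_trans hsa hsr.le)).2
    have h1 : τ - f' a < (r - a) / al := by linarith
    have h2 : (r - a) / al < τ - f' a := by
      rw [div_lt_iff₀ hα]; nlinarith
    linarith
end PW2


lemma int_linear (c d m n : ℝ) :
    ∫ τ in m..n, (c + d * τ) = c * (n - m) + d * ((n ^ 2 - m ^ 2) / 2) := by
  rw [intervalIntegral.integral_add (intervalIntegrable_const)
      (by exact (continuous_const.mul continuous_id').intervalIntegrable m n :
        IntervalIntegrable (fun τ => d * τ) MeasureTheory.volume m n),
    intervalIntegral.integral_const, intervalIntegral.integral_const_mul,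
    integral_id]
  simp [smul_eq_mul]; ring

section INT
variable {al be : ℝ} {g' f' : ℝ → ℝ}
variable (hα : 0 < al) (hαβ : al ≤ be)
  (hcont : Continuous g') (hmono : Monotone g')
  (hinv : ∀ r ∈ Set.range g', g' (f' r) = r)
  (hbi : ∀ r₁ ∈ Set.range g', ∀ r₂ ∈ Set.range g', r₁ < r₂ →
      (1 / be) * (r₂ - r₁) ≤ f' r₂ - f' r₁ ∧ f' r₂ - f' r₁ ≤ (1 / al) * (r₂ - r₁))

include hα hαβ hcont hmono hinv hbi

lemma Dlow {a b : ℝ} (ha : a ∈ Set.range g') (hb : b ∈ Set.range g') (hab : a ≤ b) :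
    (b - a) ^ 2 ≤ 2 * be * ∫ τ in (f' a)..(f' b), (g' τ - a) := by
  have hbe : 0 < be := lt_of_lt_of_le hα hαβ
  obtain ⟨hT1, hT2⟩ := biLe hα hαβ hbi ha hb hab
  have hd0 : 0 ≤ (b - a) / be := div_nonneg (by linarith) hbe.le
  have ham : f' a ≤ f' b - (b - a) / be := by linarith
  have hmb : f' b - (b - a) / be ≤ f' b := by linarith
  have hI : ∀ x y : ℝ, IntervalIntegrable (fun τ => g' τ - a) MeasureTheory.volume x y :=
    fun x y => (hcont.sub continuous_const).intervalIntegrable x y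
  have hsplit : (∫ τ in (f' a)..(f' b - (b - a) / be), (g' τ - a))
        + (∫ τ in (f' b - (b - a) / be)..(f' b), (g' τ - a))
      = ∫ τ in (f' a)..(f' b), (g' τ - a) :=
    intervalIntegral.integral_add_adjacent_intervals (hI _ _) (hI _ _)
  have hP1 : 0 ≤ ∫ τ in (f' a)..(f' b - (b - a) / be), (g' τ - a) := by
    apply intervalIntegral.integral_nonneg ham
    intro u hu
    have : a ≤ g' u := by
      rw [← hinv a ha]; exact hmono hu.1
    linarith
  have hP2 : (∫ τ in (f' b - (b - a) / be)..(f' b), ((b - a - be * f' b) + be * τ))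
      ≤ ∫ τ in (f' b - (b - a) / be)..(f' b), (g' τ - a) := by
    apply intervalIntegral.integral_mono_on hmb
      ((continuous_const.add (continuous_const.mul continuous_id')).intervalIntegrable _ _)
      (hI _ _)
    intro u hu
    have := pt_iii hα hαβ hcont hmono hinv hbi hb hu.2
    simp only [Pi.add_apply, Pi.mul_apply]
    linarith
  rw [int_linear] at hP2
  have hV : 2 * be * ((b - a - be * f' b) * (f' b - (f' b - (b - a) / be))
        + be * ((f' b ^ 2 - (f' b - (b - a) / be) ^ 2) / 2))
      = (b - a) ^ 2 := by
    field_simp; ring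
  nlinarith

lemma Dup {a b : ℝ} (ha : a ∈ Set.range g') (hb : b ∈ Set.range g') (hab : a ≤ b) :
    2 * al * ∫ τ in (f' a)..(f' b), (g' τ - a) ≤ (b - a) ^ 2 := by
  obtain ⟨hT1, hT2⟩ := biLe hα hαβ hbi ha hb hab
  have hbe : 0 < be := lt_of_lt_of_le hα hαβ
  have hd0 : 0 ≤ (b - a) / be := div_nonneg (by linarith) hbe.le
  have hT0 : f' a ≤ f' b := by linarith
  have hI : ∀ x y : ℝ, IntervalIntegrable (fun τ => g' τ - a) MeasureTheory.volume x y :=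
    fun x y => (hcont.sub continuous_const).intervalIntegrable x y
  have hP : (∫ τ in (f' a)..(f' b), (g' τ - a))
      ≤ ∫ τ in (f' a)..(f' b), ((b - a - al * f' b) + al * τ) := by
    apply intervalIntegral.integral_mono_on hT0 (hI _ _)
      ((continuous_const.add (continuous_const.mul continuous_id')).intervalIntegrable _ _)
    intro u hu
    have := pt_iv hα hαβ hcont hmono hinv hbi ha hb hab hu.1 hu.2
    simp only [Pi.add_apply, Pi.mul_apply]
    linarith
  rw [int_linear] at hP
  nlinarith [sq_nonneg (b - a - al * (f' b - f' a)), sq_nonneg (f' b - f' a),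
    mul_le_mul_of_nonneg_left hP (by linarith : (0:ℝ) ≤ 2 * al)]

lemma Dlow' {a b : ℝ} (ha : a ∈ Set.range g') (hb : b ∈ Set.range g') (hab : a ≤ b) :
    (b - a) ^ 2 ≤ 2 * be * ∫ τ in (f' a)..(f' b), (b - g' τ) := by
  have hbe : 0 < be := lt_of_lt_of_le hα hαβ
  obtain ⟨hT1, hT2⟩ := biLe hα hαβ hbi ha hb hab
  have hd0 : 0 ≤ (b - a) / be := div_nonneg (by linarith) hbe.le
  have ham : f' a ≤ f' a + (b - a) / be := by linarith
  have hmb : f' a + (b - a) / be ≤ f' b := by linarith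
  have hI : ∀ x y : ℝ, IntervalIntegrable (fun τ => b - g' τ) MeasureTheory.volume x y :=
    fun x y => (continuous_const.sub hcont).intervalIntegrable x y
  have hsplit : (∫ τ in (f' a)..(f' a + (b - a) / be), (b - g' τ))
        + (∫ τ in (f' a + (b - a) / be)..(f' b), (b - g' τ))
      = ∫ τ in (f' a)..(f' b), (b - g' τ) :=
    intervalIntegral.integral_add_adjacent_intervals (hI _ _) (hI _ _)
  have hP2 : 0 ≤ ∫ τ in (f' a + (b - a) / be)..(f' b), (b - g' τ) := by
    apply intervalIntegral.integral_nonneg hmb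
    intro u hu
    have : g' u ≤ b := by
      rw [← hinv b hb]; exact hmono hu.2
    linarith
  have hP1 : (∫ τ in (f' a)..(f' a + (b - a) / be), ((b - a + be * f' a) + (-be) * τ))
      ≤ ∫ τ in (f' a)..(f' a + (b - a) / be), (b - g' τ) := by
    apply intervalIntegral.integral_mono_on ham
      ((continuous_const.add (continuous_const.mul continuous_id')).intervalIntegrable _ _)
      (hI _ _)
    intro u hu
    have := pt_v hα hαβ hcont hmono hinv hbi ha hu.1
    simp only [Pi.add_apply, Pi.mul_apply]
    linarith
  rw [int_linear] at hP1
  have hV : 2 * be * ((b - a + be * f' a) * ((f' a + (b - a) / be) - f' a)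
        + (-be) * (((f' a + (b - a) / be) ^ 2 - f' a ^ 2) / 2))
      = (b - a) ^ 2 := by
    field_simp; ring
  nlinarith

lemma Dup' {a b : ℝ} (ha : a ∈ Set.range g') (hb : b ∈ Set.range g') (hab : a ≤ b) :
    2 * al * ∫ τ in (f' a)..(f' b), (b - g' τ) ≤ (b - a) ^ 2 := by
  obtain ⟨hT1, hT2⟩ := biLe hα hαβ hbi ha hb hab
  have hbe : 0 < be := lt_of_lt_of_le hα hαβ
  have hd0 : 0 ≤ (b - a) / be := div_nonneg (by linarith) hbe.le
  have hT0 : f' a ≤ f' b := by linarith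
  have hI : ∀ x y : ℝ, IntervalIntegrable (fun τ => b - g' τ) MeasureTheory.volume x y :=
    fun x y => (continuous_const.sub hcont).intervalIntegrable x y
  have hP : (∫ τ in (f' a)..(f' b), (b - g' τ))
      ≤ ∫ τ in (f' a)..(f' b), ((b - a + al * f' a) + (-al) * τ) := by
    apply intervalIntegral.integral_mono_on hT0 (hI _ _)
      ((continuous_const.add (continuous_const.mul continuous_id')).intervalIntegrable _ _)
    intro u hu
    have := pt_vi hα hαβ hcont hmono hinv hbi ha hb hab hu.1 hu.2
    simp only [Pi.add_apply, Pi.mul_apply]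
    linarith
  rw [int_linear] at hP
  nlinarith [sq_nonneg (b - a - al * (f' b - f' a)), sq_nonneg (f' b - f' a),
    mul_le_mul_of_nonneg_left hP (by linarith : (0:ℝ) ≤ 2 * al)]
end INT

section EM
variable {al be : ℝ} {g' g f' : ℝ → ℝ}
variable (hα : 0 < al) (hαβ : al ≤ be)
  (hcont : Continuous g') (hmono : Monotone g')
  (hg : ∀ t : ℝ, g t = ∫ τ in (0:ℝ)..t, g' τ)
  (hinv : ∀ r ∈ Set.range g', g' (f' r) = r)
  (hbi : ∀ r₁ ∈ Set.range g', ∀ r₂ ∈ Set.range g', r₁ < r₂ →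
      (1 / be) * (r₂ - r₁) ≤ f' r₂ - f' r₁ ∧ f' r₂ - f' r₁ ≤ (1 / al) * (r₂ - r₁))

include hcont hg

lemma Edef (c r : ℝ) :
    g (f' r) - g (f' c) - c * (f' r - f' c) = ∫ τ in (f' c)..(f' r), (g' τ - c) := by
  have h1 : g (f' r) - g (f' c) = ∫ τ in (f' c)..(f' r), g' τ := by
    rw [hg, hg]
    exact intervalIntegral.integral_interval_sub_left
      (hcont.intervalIntegrable _ _) (hcont.intervalIntegrable _ _)
  rw [intervalIntegral.integral_sub (hcont.intervalIntegrable _ _) intervalIntegrable_const,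
    intervalIntegral.integral_const, smul_eq_mul, ← h1]
  ring

include hα hαβ hmono hinv hbi

lemma Elow {c r : ℝ} (hc : c ∈ Set.range g') (hr : r ∈ Set.range g') :
    (r - c) ^ 2 ≤ 2 * be * (g (f' r) - g (f' c) - c * (f' r - f' c)) := by
  rw [Edef hcont hg]
  rcases le_total c r with hcr | hcr
  · exact Dlow hα hαβ hcont hmono hinv hbi hc hr hcr
  · have heq : (∫ τ in (f' c)..(f' r), (g' τ - c)) = ∫ τ in (f' r)..(f' c), (c - g' τ) := by
      rw [intervalIntegral.integral_symm, ← intervalIntegral.integral_neg]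
      congr 1; ext τ; ring
    rw [heq, show (r - c) ^ 2 = (c - r) ^ 2 by ring]
    exact Dlow' hα hαβ hcont hmono hinv hbi hr hc hcr

lemma Eup {c r : ℝ} (hc : c ∈ Set.range g') (hr : r ∈ Set.range g') :
    2 * al * (g (f' r) - g (f' c) - c * (f' r - f' c)) ≤ (r - c) ^ 2 := by
  rw [Edef hcont hg]
  rcases le_total c r with hcr | hcr
  · exact Dup hα hαβ hcont hmono hinv hbi hc hr hcr
  · have heq : (∫ τ in (f' c)..(f' r), (g' τ - c)) = ∫ τ in (f' r)..(f' c), (c - g' τ) := by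
      rw [intervalIntegral.integral_symm, ← intervalIntegral.integral_neg]
      congr 1; ext τ; ring
    rw [heq, show (r - c) ^ 2 = (c - r) ^ 2 by ring]
    exact Dup' hα hαβ hcont hmono hinv hbi hr hc hcr

/-- the pointwise master inequality -/
lemma master {y q h : ℝ} (hq : q ∈ Set.range g') (hh : h ∈ Set.range g') :
    al * (y - q) ^ 2 ≤ be * (y - h) ^ 2
      + 2 * al * be * ((g (f' q) - y * f' q) - (g (f' h) - y * f' h)) := by
  have hbe : 0 < be := lt_of_lt_of_le hα hαβ
  rcases le_total q h with hqh | hqh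
  · rcases le_total y q with hyq | hyq
    · -- y ≤ q ≤ h
      have hid : (g (f' q) - y * f' q) - (g (f' h) - y * f' h)
          = -(g (f' h) - g (f' q) - q * (f' h - f' q)) + (q - y) * (f' q - f' h) := by ring
      have hE := Eup hα hαβ hcont hmono hg hinv hbi hq hh
      have hb2 := (biLe hα hαβ hbi hq hh hqh).2
      rw [le_div_iff₀ hα] at hb2
      rw [hid]
      nlinarith [mul_le_mul_of_nonneg_left hE hbe.le,
        mul_le_mul_of_nonneg_left hb2 (sub_nonneg.2 hyq),
        mul_nonneg (sub_nonneg.2 hαβ) (sq_nonneg (y - q))]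
    · rcases le_total y h with hyh | hyh
      · -- q ≤ y ≤ h
        have hyR : y ∈ Set.range g' := mem_range_between hcont hq hh hyq hyh
        have hid : (g (f' q) - y * f' q) - (g (f' h) - y * f' h)
            = (g (f' q) - g (f' y) - y * (f' q - f' y))
              - (g (f' h) - g (f' y) - y * (f' h - f' y)) := by ring
        have hE1 := Elow hα hαβ hcont hmono hg hinv hbi hyR hq
        have hE2 := Eup hα hαβ hcont hmono hg hinv hbi hyR hh
        rw [hid]
        nlinarith [mul_le_mul_of_nonneg_left hE1 hα.le,
          mul_le_mul_of_nonneg_left hE2 hbe.le]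
      · -- q ≤ h ≤ y
        have hid : (g (f' q) - y * f' q) - (g (f' h) - y * f' h)
            = (g (f' q) - g (f' h) - h * (f' q - f' h)) + (h - y) * (f' q - f' h) := by ring
        have hE := Elow hα hαβ hcont hmono hg hinv hbi hh hq
        have hb1 := (biLe hα hαβ hbi hq hh hqh).1
        rw [div_le_iff₀ hbe] at hb1
        rw [hid]
        nlinarith [mul_le_mul_of_nonneg_left hE hα.le,
          mul_le_mul_of_nonneg_left hb1 (sub_nonneg.2 hyh),
          mul_nonneg (sub_nonneg.2 hαβ) (sq_nonneg (y - h))]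
  · rcases le_total y h with hyh | hyh
    · -- y ≤ h ≤ q
      have hid : (g (f' q) - y * f' q) - (g (f' h) - y * f' h)
          = (g (f' q) - g (f' h) - h * (f' q - f' h)) + (h - y) * (f' q - f' h) := by ring
      have hE := Elow hα hαβ hcont hmono hg hinv hbi hh hq
      have hb1 := (biLe hα hαβ hbi hh hq hqh).1
      rw [div_le_iff₀ hbe] at hb1
      rw [hid]
      nlinarith [mul_le_mul_of_nonneg_left hE hα.le,
        mul_le_mul_of_nonneg_left hb1 (sub_nonneg.2 hyh),
        mul_nonneg (sub_nonneg.2 hαβ) (sq_nonneg (y - h))]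
    · rcases le_total y q with hyq | hyq
      · -- h ≤ y ≤ q
        have hyR : y ∈ Set.range g' := mem_range_between hcont hh hq hyh hyq
        have hid : (g (f' q) - y * f' q) - (g (f' h) - y * f' h)
            = (g (f' q) - g (f' y) - y * (f' q - f' y))
              - (g (f' h) - g (f' y) - y * (f' h - f' y)) := by ring
        have hE1 := Elow hα hαβ hcont hmono hg hinv hbi hyR hq
        have hE2 := Eup hα hαβ hcont hmono hg hinv hbi hyR hh
        rw [hid]
        nlinarith [mul_le_mul_of_nonneg_left hE1 hα.le,
          mul_le_mul_of_nonneg_left hE2 hbe.le]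
      · -- h ≤ q ≤ y
        have hid : (g (f' q) - y * f' q) - (g (f' h) - y * f' h)
            = -(g (f' h) - g (f' q) - q * (f' h - f' q)) + (q - y) * (f' q - f' h) := by ring
        have hE := Eup hα hαβ hcont hmono hg hinv hbi hq hh
        have hb2 := (biLe hα hαβ hbi hh hq hqh).2
        rw [le_div_iff₀ hα] at hb2
        rw [hid]
        nlinarith [mul_le_mul_of_nonneg_left hE hbe.le,
          mul_le_mul_of_nonneg_left hb2 (sub_nonneg.2 hyq),
          mul_nonneg (sub_nonneg.2 hαβ) (sq_nonneg (y - q))]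
end EM

/-- Squared error minimization through matching loss minimization: for a
Fenchel–Legendre pair `(f,g)` with `f'` being `[1/β, 1/α]` bi-Lipschitz on the
range of `g'`, if a predictor `p` is an `ε`-approximate minimizer of the
population matching loss `E[ℓ_g(y, f'(·))]` over a class `H`, then
`E[(y − p(x))²] ≤ (β/α)·inf_{h∈H} E[(y − h(x))²] + 2βε`. -/
theorem squared_error_via_matching_loss {X : Type*} [MeasurableSpace X]
    (D : Measure (X × ℝ)) [IsProbabilityMeasure D]
    (hlabels : ∀ᵐ z ∂D, z.2 ∈ Set.Icc (0:ℝ) 1)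
    (α β : ℝ) (hα : 0 < α) (hαβ : α ≤ β)
    (g' g f f' : ℝ → ℝ)
    (hcont : Continuous g') (hmono : Monotone g')
    (hg : ∀ t : ℝ, g t = ∫ τ in (0:ℝ)..t, g' τ)
    (hinv : ∀ r ∈ Set.range g', g' (f' r) = r)
    (hdual : ∀ r ∈ Set.range g', f r = r * f' r - g (f' r))
    (hf'biLip : ∀ r₁ ∈ Set.range g', ∀ r₂ ∈ Set.range g', r₁ < r₂ →
      (1 / β) * (r₂ - r₁) ≤ f' r₂ - f' r₁ ∧ f' r₂ - f' r₁ ≤ (1 / α) * (r₂ - r₁))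
    (H : Set (X → ℝ)) (hH : ∀ h ∈ H, Measurable h ∧ ∀ x, h x ∈ Set.range g')
    (p : X → ℝ) (hpmeas : Measurable p) (hpran : ∀ x, p x ∈ Set.range g')
    (ε : ℝ) (hε : 0 ≤ ε)
    (hintp : Integrable (fun z : X × ℝ => g (f' (p z.1)) - z.2 * f' (p z.1)) D)
    (hinth : ∀ h ∈ H,
      Integrable (fun z : X × ℝ => g (f' (h z.1)) - z.2 * f' (h z.1)) D)
    (hintp2 : Integrable (fun z : X × ℝ => (z.2 - p z.1) ^ 2) D)
    (hinth2 : ∀ h ∈ H, Integrable (fun z : X × ℝ => (z.2 - h z.1) ^ 2) D)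
    (happrox : ∀ h ∈ H,
      ∫ z, (g (f' (p z.1)) - z.2 * f' (p z.1)) ∂D
        ≤ ∫ z, (g (f' (h z.1)) - z.2 * f' (h z.1)) ∂D + ε) :
    ∀ h ∈ H,
      ∫ z, (z.2 - p z.1) ^ 2 ∂D
        ≤ (β / α) * ∫ z, (z.2 - h z.1) ^ 2 ∂D + 2 * β * ε := by
  intro h hHh
  obtain ⟨hhmeas, hhran⟩ := hH h hHh
  have hbe : 0 < β := lt_of_lt_of_le hα hαβ
  have key : ∀ z : X × ℝ,
      α * (z.2 - p z.1) ^ 2 ≤ β * (z.2 - h z.1) ^ 2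
        + 2 * α * β * ((g (f' (p z.1)) - z.2 * f' (p z.1))
            - (g (f' (h z.1)) - z.2 * f' (h z.1))) :=
    fun z => master hα hαβ hcont hmono hg hinv hf'biLip (hpran z.1) (hhran z.1)
  have hF : Integrable (fun z : X × ℝ => α * (z.2 - p z.1) ^ 2) D := hintp2.const_mul α
  have hG1 : Integrable (fun z : X × ℝ => β * (z.2 - h z.1) ^ 2) D :=
    (hinth2 h hHh).const_mul β
  have hG2 : Integrable (fun z : X × ℝ =>
      2 * α * β * ((g (f' (p z.1)) - z.2 * f' (p z.1))
        - (g (f' (h z.1)) - z.2 * f' (h z.1)))) D :=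
    (hintp.sub (hinth h hHh)).const_mul (2 * α * β)
  have hIG : (∫ z, α * (z.2 - p z.1) ^ 2 ∂D)
      ≤ ∫ z, (β * (z.2 - h z.1) ^ 2
        + 2 * α * β * ((g (f' (p z.1)) - z.2 * f' (p z.1))
            - (g (f' (h z.1)) - z.2 * f' (h z.1)))) ∂D :=
    integral_mono hF (hG1.add hG2) key
  rw [integral_add hG1 hG2, integral_const_mul, integral_const_mul, integral_const_mul,
    integral_sub hintp (hinth h hHh)] at hIG
  have happ := happrox h hHh
  have hfin : α * ∫ z, (z.2 - p z.1) ^ 2 ∂D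
      ≤ β * (∫ z, (z.2 - h z.1) ^ 2 ∂D) + 2 * α * β * ε := by
    nlinarith [mul_le_mul_of_nonneg_left happ
      (by positivity : (0:ℝ) ≤ 2 * α * β)]
  have heq : (β * (∫ z, (z.2 - h z.1) ^ 2 ∂D) + 2 * α * β * ε) / α
      = (β / α) * (∫ z, (z.2 - h z.1) ^ 2 ∂D) + 2 * β * ε := by
    field_simp
  rw [← heq, le_div_iff₀ hα, mul_comm]
  exact hfin
end
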